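/- arXiv:math/0607352 — 10 statements merged into one kernel-verified Lean document; each statement's English description precedes it below -/
import Mathlib

section
/- Let G and H be locally finite simple graphs and let α be an H-labeling of G. Then for every vertex (u,i) of G⋈_α H, the degree of (u,i) in G⋈_α H equals the sum, over all vertices v of G such that v is adjacent to u in G and α(u,{v,u}) is adjacent to i in H, of val(α(v,{v,u})). -/
open Finset Filter

open scoped Classical

universe u v

variable {V : Type u} {W : Type v}

/-- The generalized zig-zag product of an `H`-labeled graph `(G, α)` with `H`.
The labeling `α : D(G) → V(H)` is encoded as `α : V → V → W`, where for adjacent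
vertices `u, v` the value `α u v` represents `α(u, {u,v})`. -/
def zigzag (G : SimpleGraph V) (H : SimpleGraph W) (α : V → V → W) :
    SimpleGraph (V × W) where
  Adj p q := G.Adj p.1 q.1 ∧ H.Adj (α p.1 q.1) p.2 ∧ H.Adj (α q.1 p.1) q.2
  symm := ⟨fun _ _ h => ⟨h.1.symm, h.2.2, h.2.1⟩⟩
  loopless := ⟨fun p h => G.loopless.irrefl p.1 h.1⟩

/-- The vertex set of the zig-zag product `G ⋈_α H`:
pairs `(u, i)` such that some edge `e` of `G` is incident to `u` with `i`
adjacent to `α(u, e)` in `H`. -/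
def zigzagVerts (G : SimpleGraph V) (H : SimpleGraph W) (α : V → V → W) :
    Set (V × W) :=
  {p | ∃ w, G.Adj p.1 w ∧ H.Adj (α p.1 w) p.2}

theorem Finset.card_biUnion_singleton_product {α β : Type*} [DecidableEq β]
    (s : Finset α) (t : α → Finset β) :
    (s.biUnion fun a => {a} ×ˢ t a).card = ∑ a ∈ s, (t a).card := by
  rw [card_biUnion fun a _ b _ hab => disjoint_product.mpr (Or.inl (disjoint_singleton.mpr hab))]
  simp only [card_product, card_singleton, one_mul]

theorem neighborFinset_zigzag (G : SimpleGraph V) (H : SimpleGraph W) (α : V → V → W)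
    [∀ x : V, Fintype (G.neighborSet x)] [∀ h : W, Fintype (H.neighborSet h)]
    (u : V) (i : W) [Fintype ((zigzag G H α).neighborSet (u, i))] :
    (zigzag G H α).neighborFinset (u, i) =
      ((G.neighborFinset u).filter fun v => H.Adj (α u v) i).biUnion
        fun v => {v} ×ˢ H.neighborFinset (α v u) := by
  ext ⟨v, j⟩
  rw [SimpleGraph.mem_neighborFinset]
  simp [zigzag, and_assoc]

/-- For locally finite simple graphs `G`, `H` and an `H`-labeling `α`
of `G`, the degree of a vertex `(u, i)` of `G ⋈_α H` is the sum, over all `v` adjacent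
to `u` in `G` with `α(u, {v,u})` adjacent to `i` in `H`, of `val(α(v, {v,u}))`. -/
theorem zigzag_degree (G : SimpleGraph V) (H : SimpleGraph W) (α : V → V → W)
    [∀ x : V, Fintype (G.neighborSet x)] [∀ h : W, Fintype (H.neighborSet h)]
    (u : V) (i : W) (hu : (u, i) ∈ zigzagVerts G H α)
    [Fintype ((zigzag G H α).neighborSet (u, i))] :
    (zigzag G H α).degree (u, i) =
      ∑ w ∈ (G.neighborFinset u).filter (fun w => H.Adj (α u w) i),
        H.degree (α w u) := by
  simp only [← SimpleGraph.card_neighborFinset_eq_degree, neighborFinset_zigzag,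
    card_biUnion_singleton_product]
end

section
/- Let G be a finite simple graph, H a locally finite simple graph, and α an H-labeling of G. Then the number of edges of G⋈_α H equals the sum over all edges e = {u,v} of G of val(α(u,e)) · val(α(v,e)). -/
/-!
Projecting each edge of `G ⋈_α H` to its first coordinates gives an edge of `G`. The edges lying
over `e = {u, v}` are exactly the `{(u, i), (v, j)}` with `i ∼ α(u, e)` and `j ∼ α(v, e)`, and
distinct such pairs `(i, j)` give distinct edges because `u ≠ v`; so the fibre over `e` has
`val(α(u, e)) · val(α(v, e))` elements, and summing over the edges of `G` counts every edge once.
-/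

open Finset Filter

open scoped Classical

universe u v

variable {V : Type u} {W : Type v}

theorem Set.ncard_eq_sum_ncard_inter_preimage {α β : Type*} {s : Set α} {f : α → β}
    {t : Finset β} (hst : Set.MapsTo f s t) (hfin : ∀ b ∈ t, (s ∩ f ⁻¹' {b}).Finite) :
    s.ncard = ∑ b ∈ t, (s ∩ f ⁻¹' {b}).ncard := by
  have hs : s = ⋃ b ∈ (t : Set β), s ∩ f ⁻¹' {b} := by
    ext a
    simpa using fun ha => hst ha
  have hdisj : (t : Set β).PairwiseDisjoint fun b => s ∩ f ⁻¹' {b} := fun b _ c _ hbc =>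
    (((Set.disjoint_singleton.2 hbc).preimage f).inter_left' s).inter_right' s
  conv_lhs => rw [hs]
  rw [t.finite_toSet.ncard_biUnion hfin hdisj, finsum_mem_coe_finset]

theorem Sym2.injective_mk_prodMk {α β : Type*} {u v : α} (huv : u ≠ v) :
    Function.Injective fun p : β × β => s((u, p.1), (v, p.2)) := by
  rintro ⟨a, b⟩ ⟨c, d⟩ h
  simp only [Sym2.eq_iff, Prod.mk.injEq] at h
  rcases h with ⟨⟨-, rfl⟩, -, rfl⟩ | ⟨⟨h, -⟩, -⟩
  · rfl
  · exact absurd h huv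

noncomputable def labelValencyProduct (H : SimpleGraph W) (α : V → V → W) : Sym2 V → ℕ :=
  Sym2.lift ⟨fun a b => (H.neighborSet (α a b)).ncard * (H.neighborSet (α b a)).ncard,
    fun _ _ => mul_comm _ _⟩

section

variable (G : SimpleGraph V) (H : SimpleGraph W) (α : V → V → W)

theorem zigzag_edgeSet_inter_preimage_map_fst {u v : V} (huv : G.Adj u v) :
    (zigzag G H α).edgeSet ∩ Sym2.map Prod.fst ⁻¹' {s(u, v)} =
      (fun p : W × W => s((u, p.1), (v, p.2))) ''
        (H.neighborSet (α u v) ×ˢ H.neighborSet (α v u)) := by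
  ext z
  induction z using Sym2.inductionOn with
  | hf p q =>
    obtain ⟨a, i⟩ := p
    obtain ⟨b, j⟩ := q
    simp only [Set.mem_inter_iff, SimpleGraph.mem_edgeSet, Set.mem_preimage,
      Set.mem_singleton_iff, Sym2.map_mk, Set.mem_image, Set.mem_prod,
      SimpleGraph.mem_neighborSet, Prod.exists, zigzag, Sym2.eq_iff, Prod.mk.injEq]
    constructor
    · rintro ⟨⟨-, hi, hj⟩, ⟨rfl, rfl⟩ | ⟨rfl, rfl⟩⟩
      · exact ⟨i, j, ⟨hi, hj⟩, by simp⟩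
      · exact ⟨j, i, ⟨hj, hi⟩, by simp⟩
    · rintro ⟨i', j', ⟨hi, hj⟩, ⟨⟨rfl, rfl⟩, rfl, rfl⟩ | ⟨⟨rfl, rfl⟩, rfl, rfl⟩⟩
      · exact ⟨⟨huv, hi, hj⟩, by simp⟩
      · exact ⟨⟨huv.symm, hj, hi⟩, by simp⟩

variable {G H}

theorem finite_zigzag_edgeSet_inter_preimage_map_fst (hH : ∀ h : W, (H.neighborSet h).Finite)
    {e : Sym2 V} (he : e ∈ G.edgeSet) :
    ((zigzag G H α).edgeSet ∩ Sym2.map Prod.fst ⁻¹' {e}).Finite := by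
  induction e using Sym2.inductionOn with
  | hf u v =>
    rw [zigzag_edgeSet_inter_preimage_map_fst G H α he]
    exact ((hH _).prod (hH _)).image _

theorem ncard_zigzag_edgeSet_inter_preimage_map_fst {e : Sym2 V} (he : e ∈ G.edgeSet) :
    ((zigzag G H α).edgeSet ∩ Sym2.map Prod.fst ⁻¹' {e}).ncard = labelValencyProduct H α e := by
  induction e using Sym2.inductionOn with
  | hf u v =>
    rw [zigzag_edgeSet_inter_preimage_map_fst G H α he,
      (Sym2.injective_mk_prodMk he.ne).injOn.ncard_image, Set.ncard_prod]
    rfl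

theorem map_fst_mem_edgeSet_of_mem_zigzag_edgeSet {z : Sym2 (V × W)}
    (hz : z ∈ (zigzag G H α).edgeSet) : z.map Prod.fst ∈ G.edgeSet := by
  induction z using Sym2.inductionOn with
  | hf p q => exact hz.1

end

/-- For a finite simple graph `G`, a locally finite simple graph `H`
and an `H`-labeling `α` of `G`, the number of edges of `G ⋈_α H` equals the sum over
all edges `e = {u,v}` of `G` of `val(α(u,e)) · val(α(v,e))`. -/
theorem zigzag_edge_count [Fintype V] (G : SimpleGraph V) (H : SimpleGraph W)
    (hH : ∀ h : W, (H.neighborSet h).Finite) (α : V → V → W) :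
    ((zigzag G H α).edgeSet).ncard =
      ∑ e ∈ G.edgeSet.toFinset,
        Sym2.lift ⟨fun a b => (H.neighborSet (α a b)).ncard * (H.neighborSet (α b a)).ncard,
          fun a b => mul_comm _ _⟩ e := by
  have hmaps : Set.MapsTo (Sym2.map Prod.fst) (zigzag G H α).edgeSet G.edgeSet.toFinset :=
    fun z hz => Set.mem_toFinset.2 (map_fst_mem_edgeSet_of_mem_zigzag_edgeSet α hz)
  rw [Set.ncard_eq_sum_ncard_inter_preimage hmaps fun e he =>
    finite_zigzag_edgeSet_inter_preimage_map_fst α hH (Set.mem_toFinset.1 he)]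
  exact Finset.sum_congr rfl fun e he =>
    ncard_zigzag_edgeSet_inter_preimage_map_fst α (Set.mem_toFinset.1 he)
end

section
/- Let G be a finite simple graph with no isolated vertices, H a locally finite simple graph, and α a locally constant H-labeling of G such that val(h) = k ≥ 1 for every h in the image of α. Then there exist at least k^{|V(G)|} distinct subsets S of V(G⋈_α H) such that the subgraph of G⋈_α H induced on S is isomorphic to G. -/
/-! Since `α` is locally constant, each vertex `u` of `G` carries a single label `β u`. Any choice
function `f` with `f u` an `H`-neighbour of `β u` makes `u ↦ (u, f u)` an embedding of `G` into
`G ⋈_α H` whose image is an induced copy of `G`; distinct `f` give distinct images, and there are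
`k ^ |V(G)|` such `f`. -/

open Finset Filter

open scoped Classical

universe u v

variable {V : Type u} {W : Type v}

variable {G : SimpleGraph V} {H : SimpleGraph W} {α : V → V → W} {f : V → W}

def zigzagSectionEmbedding (hf : ∀ u v, G.Adj u v → H.Adj (α u v) (f u)) :
    G ↪g zigzag G H α where
  toFun u := (u, f u)
  inj' _ _ h := congrArg Prod.fst h
  map_rel_iff' {u v} := ⟨fun h => h.1, fun h => ⟨h, hf u v h, hf v u h.symm⟩⟩

theorem graphOn_univ_subset_zigzagVerts (hG : ∀ x : V, ∃ y, G.Adj x y)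
    (hf : ∀ u v, G.Adj u v → H.Adj (α u v) (f u)) :
    Set.univ.graphOn f ⊆ zigzagVerts G H α := by
  intro p hp
  obtain ⟨v, huv⟩ := hG p.1
  exact ⟨v, huv, (Set.mem_graphOn.mp hp).2 ▸ hf p.1 v huv⟩

theorem nonempty_induce_graphOn_univ_iso (hf : ∀ u v, G.Adj u v → H.Adj (α u v) (f u)) :
    Nonempty ((zigzag G H α).induce (Set.univ.graphOn f) ≃g G) := by
  rw [Set.graphOn_univ_eq_range]
  exact ⟨(zigzagSectionEmbedding hf).isoInduceRange.symm⟩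

theorem exists_vertex_label_of_locallyConstant (hG : ∀ x : V, ∃ y, G.Adj x y)
    (hlc : ∀ x y z : V, G.Adj x y → G.Adj x z → α x y = α x z) :
    ∃ β : V → W, ∀ u v, G.Adj u v → α u v = β u := by
  choose w hw using hG
  exact ⟨fun u => α u (w u), fun u v huv => hlc u v (w u) huv (hw u)⟩

theorem zigzag_many_copies_general [Fintype V] (G : SimpleGraph V) (H : SimpleGraph W)
    (hG : ∀ x : V, ∃ y, G.Adj x y)
    (hH : ∀ h : W, (H.neighborSet h).Finite)
    (α : V → V → W)
    (hlc : ∀ x y z : V, G.Adj x y → G.Adj x z → α x y = α x z)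
    (k : ℕ)
    (hval : ∀ x y : V, G.Adj x y → (H.neighborSet (α x y)).ncard = k) :
    ∃ 𝒮 : Finset (Set (V × W)),
      k ^ Fintype.card V ≤ 𝒮.card ∧
      ∀ S ∈ 𝒮, S ⊆ zigzagVerts G H α ∧
        Nonempty ((zigzag G H α).induce S ≃g G) := by
  obtain ⟨β, hβ⟩ := exists_vertex_label_of_locallyConstant hG hlc
  let N u := (hH (β u)).toFinset
  have hN_card u : (N u).card = k := by
    obtain ⟨v, huv⟩ := hG u
    rw [← Set.ncard_eq_toFinset_card _ (hH _), ← hβ u v huv, hval u v huv]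
  have hgraph_inj : Function.Injective fun f : V → W => Set.univ.graphOn f :=
    fun f g h => Set.eqOn_univ f g |>.mp (Set.graphOn_inj.mp h)
  refine ⟨(Fintype.piFinset N).image fun f => Set.univ.graphOn f, ?_, ?_⟩
  · simp [Finset.card_image_of_injective _ hgraph_inj, hN_card]
  · simp only [Finset.mem_image, Fintype.mem_piFinset]
    rintro S ⟨f, hf, rfl⟩
    have hf_adj u v (huv : G.Adj u v) : H.Adj (α u v) (f u) := by
      simpa [N, hβ u v huv] using hf u
    exact ⟨graphOn_univ_subset_zigzagVerts hG hf_adj, nonempty_induce_graphOn_univ_iso hf_adj⟩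

/-- If `G` is a finite simple graph with no isolated vertices, `H` is a
locally finite simple graph and `α` is a locally constant `H`-labeling of `G` with
`val(h) = k ≥ 1` for every `h` in the image of `α`, then there are at least
`k ^ |V(G)|` distinct subsets of `V(G ⋈_α H)` whose induced subgraph is isomorphic
to `G`. -/
theorem zigzag_many_copies [Fintype V] (G : SimpleGraph V) (H : SimpleGraph W)
    (hG : ∀ x : V, ∃ y, G.Adj x y)
    (hH : ∀ h : W, (H.neighborSet h).Finite)
    (α : V → V → W)
    (hlc : ∀ x y z : V, G.Adj x y → G.Adj x z → α x y = α x z)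
    (k : ℕ) (hk : 1 ≤ k)
    (hval : ∀ x y : V, G.Adj x y → (H.neighborSet (α x y)).ncard = k) :
    ∃ 𝒮 : Finset (Set (V × W)),
      k ^ Fintype.card V ≤ 𝒮.card ∧
      ∀ S ∈ 𝒮, S ⊆ zigzagVerts G H α ∧
        Nonempty ((zigzag G H α).induce S ≃g G) :=
  zigzag_many_copies_general G H hG hH α hlc k hval
end

section
/- Let G and H be locally finite simple graphs, G with no isolated vertices, and let α be a locally constant H-labeling of G such that val(h) = n ≥ 1 for every h in the image of α. Suppose f ∈ ℓ²(V(G)) satisfies Σ_{u ∼ v} f(u) = λ f(v) for every vertex v of G. Define f̂ on V(G⋈_α H) by f̂(u,i) = f(u). Then f̂ ∈ ℓ²(V(G⋈_α H)) with ‖f̂‖² = n‖f‖², and Σ_{(v,j) ∼ (u,i)} f̂(v,j) = nλ · f̂(u,i) for every vertex (u,i) of G⋈_α H; in particular, if f ≠ 0 then f̂ is a nonzero eigenfunction of the adjacency operator of G⋈_α H with eigenvalue nλ. -/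
open Finset Filter

open scoped Classical

universe u v

variable {V : Type u} {W : Type v}

/-!
Since `α` is locally constant, with value `β u` at `u`, and `G` has no isolated vertices,
the vertex set of `G ⋈_α H` is `Σ u, N_H(β u)`, a union of fibres of size `n`; this gives
`‖f̂‖² = n ‖f‖²`. The neighbours of `(u, i)` are the pairs `(v, j)` with `v ∼ u` and
`j ∈ N_H(α v u)`, so `f̂` summed over them is `n` times `f` summed over the neighbours of `u`.
-/

theorem hasSum_sigma_comp_fst_of_card_eq {ι : Type*} {κ : ι → Type*} [∀ i, Fintype (κ i)]
    {n : ℕ} (hκ : ∀ i, Fintype.card (κ i) = n) {g : ι → ℝ} (hg0 : ∀ i, 0 ≤ g i)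
    (hg : Summable g) :
    HasSum (fun s : Σ i, κ i => g s.1) (n * ∑' i, g i) := by
  have hfiber : ∀ i, HasSum (fun _ : κ i => g i) (n * g i) := fun i => by
    simpa [hκ] using hasSum_fintype (fun _ : κ i => g i)
  have hS : Summable (fun s : Σ i, κ i => g s.1) :=
    (summable_sigma_of_nonneg fun s => hg0 s.1).2
      ⟨fun i => (hfiber i).summable,
        (hg.mul_left (n : ℝ)).congr fun i => (hfiber i).tsum_eq.symm⟩
  convert hS.hasSum using 1
  rw [hS.tsum_sigma' fun i => (hfiber i).summable, tsum_congr fun i => (hfiber i).tsum_eq,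
    tsum_mul_left]

section

open SimpleGraph

variable {G : SimpleGraph V} {H : SimpleGraph W} {α : V → V → W}

theorem mem_zigzagVerts_iff_of_locallyConstant {β : V → W} (hG : ∀ x, ∃ y, G.Adj x y)
    (hβ : ∀ x y, G.Adj x y → α x y = β x) {p : V × W} :
    p ∈ zigzagVerts G H α ↔ H.Adj (β p.1) p.2 :=
  ⟨fun ⟨_, hw, hi⟩ => hβ _ _ hw ▸ hi,
    fun h => let ⟨w, hw⟩ := hG p.1; ⟨w, hw, (hβ _ _ hw).symm ▸ h⟩⟩

def zigzagVertsEquivSigma {β : V → W}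
    (hmem : ∀ p : V × W, p ∈ zigzagVerts G H α ↔ H.Adj (β p.1) p.2) :
    zigzagVerts G H α ≃ Σ u, H.neighborSet (β u) :=
  (Equiv.subtypeEquivRight hmem).trans
    (Equiv.subtypeProdEquivSigmaSubtype fun u i => H.Adj (β u) i)

variable [∀ x, Fintype (G.neighborSet x)] [∀ h, Fintype (H.neighborSet h)]

theorem sum_zigzag_neighborFinset {M : Type*} [AddCommMonoid M] {u : V} {i : W}
    [Fintype ((zigzag G H α).neighborSet (u, i))] (hi : ∀ v, G.Adj u v → H.Adj (α u v) i)
    (g : V × W → M) :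
    ∑ q ∈ (zigzag G H α).neighborFinset (u, i), g q =
      ∑ v ∈ G.neighborFinset u, ∑ j ∈ H.neighborFinset (α v u), g (v, j) :=
  sum_finset_product _ _ _ fun q => by
    rw [mem_neighborFinset, mem_neighborFinset, mem_neighborFinset]
    exact ⟨fun h => ⟨h.1, h.2.2⟩, fun h => ⟨h.1, hi _ h.1, h.2⟩⟩

theorem sum_zigzag_neighborFinset_fst {M : Type*} [AddCommMonoid M] {u : V} {i : W}
    [Fintype ((zigzag G H α).neighborSet (u, i))] (hi : ∀ v, G.Adj u v → H.Adj (α u v) i)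
    {n : ℕ} (hdeg : ∀ v, G.Adj u v → H.degree (α v u) = n) (g : V → M) :
    ∑ q ∈ (zigzag G H α).neighborFinset (u, i), g q.1 = n • ∑ v ∈ G.neighborFinset u, g v := by
  rw [sum_zigzag_neighborFinset hi, smul_sum]
  refine sum_congr rfl fun v hv => ?_
  simp only [sum_const, card_neighborFinset_eq_degree, hdeg v ((mem_neighborFinset _ _ _).1 hv)]

end

/-- For locally finite `G`, `H`, `G` without isolated vertices, and a
locally constant `H`-labeling `α` with `val(h) = n ≥ 1` on the image of `α`: if
`f ∈ ℓ²(V(G))` satisfies `Σ_{u ∼ v} f u = λ f v` for all `v`, then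
`f̂(u,i) = f u` lies in `ℓ²(V(G ⋈_α H))` with `‖f̂‖² = n ‖f‖²` and satisfies
`Σ_{(v,j) ∼ (u,i)} f̂(v,j) = n λ f̂(u,i)`; in particular `f ≠ 0` makes `f̂` a nonzero
eigenfunction of the adjacency operator of `G ⋈_α H` with eigenvalue `n λ`. -/
theorem zigzag_eigenfunction_lift (G : SimpleGraph V) (H : SimpleGraph W) (α : V → V → W)
    [∀ x : V, Fintype (G.neighborSet x)] [∀ h : W, Fintype (H.neighborSet h)]
    [∀ p : V × W, Fintype ((zigzag G H α).neighborSet p)]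
    (hG : ∀ x : V, ∃ y, G.Adj x y)
    (hlc : ∀ x y z : V, G.Adj x y → G.Adj x z → α x y = α x z)
    (n : ℕ) (hn : 1 ≤ n)
    (hval : ∀ x y : V, G.Adj x y → H.degree (α x y) = n)
    (f : V → ℂ) (hf2 : Summable fun x : V => ‖f x‖ ^ 2)
    (lam : ℂ)
    (heig : ∀ x : V, ∑ y ∈ G.neighborFinset x, f y = lam * f x) :
    Summable (fun p : ↥(zigzagVerts G H α) => ‖f (p : V × W).1‖ ^ 2) ∧
    (∑' p : ↥(zigzagVerts G H α), ‖f (p : V × W).1‖ ^ 2) = (n : ℝ) * ∑' x : V, ‖f x‖ ^ 2 ∧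
    (∀ p ∈ zigzagVerts G H α,
      ∑ q ∈ (zigzag G H α).neighborFinset p, f q.1 = (n : ℂ) * lam * f p.1) ∧
    (f ≠ 0 → ∃ p ∈ zigzagVerts G H α, f p.1 ≠ 0) := by
  choose y hy using hG
  have hmem (p : V × W) : p ∈ zigzagVerts G H α ↔ H.Adj (α p.1 (y p.1)) p.2 :=
    mem_zigzagVerts_iff_of_locallyConstant (fun x => ⟨y x, hy x⟩)
      fun x z hxz => hlc x z (y x) hxz (hy x)
  have hnorm : HasSum (fun p : zigzagVerts G H α => ‖f (p : V × W).1‖ ^ 2)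
      (n * ∑' x, ‖f x‖ ^ 2) :=
    (zigzagVertsEquivSigma hmem).symm.hasSum_iff.1 <|
      hasSum_sigma_comp_fst_of_card_eq
        (fun x => by rw [H.card_neighborSet_eq_degree, hval x (y x) (hy x)])
        (fun x => by positivity) hf2
  refine ⟨hnorm.summable, hnorm.tsum_eq, ?_, fun hf0 => ?_⟩
  · rintro ⟨u, i⟩ ⟨w, huw, hi⟩
    rw [sum_zigzag_neighborFinset_fst (fun v huv => hlc u v w huv huw ▸ hi)
      (fun v huv => hval v u huv.symm), heig, nsmul_eq_mul, mul_assoc]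
  · obtain ⟨u, hu⟩ := Function.ne_iff.1 hf0
    obtain ⟨i, hi⟩ := (H.degree_pos_iff_exists_adj _).1 (hval u (y u) (hy u) ▸ hn)
    exact ⟨(u, i), ⟨y u, hy u, hi⟩, hu⟩
end

section
/- Let G be an m-regular simple graph with m ≥ 1, let H be a d-regular simple graph on m vertices with d ≥ 1, and let α be an H-labeling of G such that for each vertex u of G the map e ↦ α(u,e) is a bijection from the set of edges incident to u onto V(H). Then sup{ Re⟨Pf,f⟩ / ‖f‖² : f ∈ ℓ²(V(G)), f ≠ 0 } ≤ sup{ Re⟨Qg,g⟩ / ‖g‖² : g ∈ ℓ²(V(G⋈_α H)), g ≠ 0 }, where Pf(v) = (1/m)Σ_{u ∼ v} f(u) and Qg(x) = (1/d²)Σ_{y ∼ x} g(y) are the normalized adjacency operators of G and of G⋈_α H respectively. -/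
/-!
Lift `f` on `V(G)` to `g (u, i) = f u`. Since each `α(u, ·)` is onto `V(H)` and `H` has no
isolated vertices, every pair `(u, i)` is a vertex of `G ⋈_α H`. Summed over the fibre of `u`, the
zig-zag neighbours reach each `G`-neighbour `v` of `u` from `d` fibre points, each time through `d`
points of the fibre of `v`, so `Σᵢ (Q g)(u, i) = Σ_{v ∼ u} f v`. Hence `⟨Q g, g⟩ = m ⟨P f, f⟩` and
`‖g‖² = m ‖f‖²`: every Rayleigh quotient of `P` is one of `Q`. The right-hand supremum is finite:
injectivity of `α(u, ·)` bounds the degrees of `G ⋈_α H` by `d²`, and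
`|Σ_{j ∼ i} g j · conj (g i)| ≤ ½ Σ_{j ∼ i} (|g j|² + |g i|²)` with double counting bounds the
quotients by `1`.
-/

open Finset Filter

open scoped Classical

universe u v

variable {V : Type u} {W : Type v}

open ComplexConjugate

namespace SimpleGraph

variable {ι : Type*} (Γ : SimpleGraph ι) [Γ.LocallyFinite]

theorem hasSum_sum_neighborFinset {a : ι → ℝ} (ha : 0 ≤ a)
    (hdeg : Summable fun i => Γ.degree i * a i) :
    HasSum (fun i => ∑ j ∈ Γ.neighborFinset i, a j) (∑' i, Γ.degree i * a i) := by
  set B : ι × ι → ℝ := fun p => if Γ.Adj p.1 p.2 then a p.1 else 0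
  have hrow : ∀ i, HasSum (fun j => B (i, j)) (Γ.degree i * a i) := by
    intro i
    have h : HasSum (fun j => B (i, j)) (∑ j ∈ Γ.neighborFinset i, B (i, j)) :=
      hasSum_sum_of_ne_finset_zero fun j hj => if_neg (by simpa using hj)
    convert h using 1
    rw [sum_congr rfl (g := fun _ => a i) fun j hj => if_pos ((Γ.mem_neighborFinset i j).1 hj),
      sum_const, card_neighborFinset_eq_degree, nsmul_eq_mul]
  have hcol : ∀ j, HasSum (fun i => B (i, j)) (∑ i ∈ Γ.neighborFinset j, a i) := by
    intro j
    have h : HasSum (fun i => B (i, j)) (∑ i ∈ Γ.neighborFinset j, B (i, j)) :=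
      hasSum_sum_of_ne_finset_zero fun i hi => if_neg (by simpa [adj_comm] using hi)
    convert h using 1
    exact sum_congr rfl fun i hi => (if_pos ((Γ.mem_neighborFinset j i).1 hi).symm).symm
  have hB0 : 0 ≤ B := fun p => by
    simp only [B, Pi.zero_apply]
    split_ifs
    exacts [ha _, le_rfl]
  have hB : Summable B := (summable_prod_of_nonneg hB0).2
    ⟨fun i => (hrow i).summable, by simpa only [(hrow _).tsum_eq] using hdeg⟩
  have hsum := (hB.hasSum.prod_fiberwise hrow).tsum_eq ▸ hB.hasSum
  exact ((Equiv.prodComm ι ι).hasSum_iff.2 hsum).prod_fiberwise hcol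

theorem norm_sum_neighborFinset_mul_conj_le (g : ι → ℂ) (i : ι) :
    ‖(∑ j ∈ Γ.neighborFinset i, g j) * conj (g i)‖ ≤
      ((∑ j ∈ Γ.neighborFinset i, ‖g j‖ ^ 2) + Γ.degree i * ‖g i‖ ^ 2) / 2 :=
  calc ‖(∑ j ∈ Γ.neighborFinset i, g j) * conj (g i)‖
      ≤ ∑ j ∈ Γ.neighborFinset i, ‖g j‖ * ‖g i‖ := by
        rw [norm_mul, Complex.norm_conj, ← sum_mul]
        gcongr
        exact norm_sum_le _ _
    _ ≤ ∑ j ∈ Γ.neighborFinset i, (‖g j‖ ^ 2 + ‖g i‖ ^ 2) / 2 :=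
        sum_le_sum fun j _ => by nlinarith [sq_nonneg (‖g j‖ - ‖g i‖)]
    _ = _ := by
        rw [← sum_div, sum_add_distrib, sum_const, card_neighborFinset_eq_degree, nsmul_eq_mul]

variable {Γ} {g : ι → ℂ}

theorem hasSum_sum_neighborFinset_add_degree_mul_div_two
    (hg : Summable fun i => Γ.degree i * ‖g i‖ ^ 2) :
    HasSum (fun i => ((∑ j ∈ Γ.neighborFinset i, ‖g j‖ ^ 2) + Γ.degree i * ‖g i‖ ^ 2) / 2)
      (∑' i, Γ.degree i * ‖g i‖ ^ 2) := by
  simpa using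
    ((Γ.hasSum_sum_neighborFinset (fun i => sq_nonneg ‖g i‖) hg).add hg.hasSum).div_const 2

theorem summable_sum_neighborFinset_mul_conj (hg : Summable fun i => Γ.degree i * ‖g i‖ ^ 2) :
    Summable fun i => (∑ j ∈ Γ.neighborFinset i, g j) * conj (g i) :=
  (hasSum_sum_neighborFinset_add_degree_mul_div_two hg).summable.of_norm_bounded
    (Γ.norm_sum_neighborFinset_mul_conj_le g)

theorem norm_tsum_sum_neighborFinset_mul_conj_le (hg : Summable fun i => Γ.degree i * ‖g i‖ ^ 2) :
    ‖∑' i, (∑ j ∈ Γ.neighborFinset i, g j) * conj (g i)‖ ≤ ∑' i, Γ.degree i * ‖g i‖ ^ 2 := by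
  have hbound := hasSum_sum_neighborFinset_add_degree_mul_div_two hg
  have hnorm := hbound.summable.of_nonneg_of_le (fun _ => norm_nonneg _)
    (Γ.norm_sum_neighborFinset_mul_conj_le g)
  rw [← hbound.tsum_eq]
  exact (norm_tsum_le_tsum_norm hnorm).trans
    (hnorm.tsum_le_tsum (Γ.norm_sum_neighborFinset_mul_conj_le g) hbound.summable)

theorem summable_degree_mul_of_degree_le {D : ℕ} (hD : ∀ i, Γ.degree i ≤ D)
    (hg : Summable fun i => ‖g i‖ ^ 2) : Summable fun i => Γ.degree i * ‖g i‖ ^ 2 :=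
  (hg.mul_left (D : ℝ)).of_nonneg_of_le (fun _ => by positivity) fun i => by
    gcongr
    exact_mod_cast hD i

theorem tsum_mul_sum_neighborFinset_mul_conj (c : ℂ) (f : ι → ℂ) :
    ∑' x, (c * ∑ y ∈ Γ.neighborFinset x, f y) * conj (f x) =
      c * ∑' x, (∑ y ∈ Γ.neighborFinset x, f y) * conj (f x) := by
  simp_rw [mul_assoc]
  exact tsum_mul_left

variable (Γ) in
def rayleighQuotients (c : ℂ) : Set ℝ :=
  {r | ∃ f : ι → ℂ, Summable (fun x => ‖f x‖ ^ 2) ∧ f ≠ 0 ∧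
    r = (∑' x, (c * ∑ y ∈ Γ.neighborFinset x, f y) * conj (f x)).re / ∑' x, ‖f x‖ ^ 2}

theorem setOf_subtype_eq_rayleighQuotients {s : Set ι} (hs : s = Set.univ) (c : ℂ) :
    {r : ℝ | ∃ g : ι → ℂ, Summable (fun p : s => ‖g p‖ ^ 2) ∧ (∃ p ∈ s, g p ≠ 0) ∧
      r = (∑' p : s, (c * ∑ q ∈ Γ.neighborFinset p, g q) * conj (g p)).re /
        ∑' p : s, ‖g p‖ ^ 2} = Γ.rayleighQuotients c := by
  subst hs
  ext r
  refine exists_congr fun g =>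
    and_congr ((Equiv.Set.univ ι).summable_iff (f := fun x => ‖g x‖ ^ 2)) (and_congr ?_ ?_)
  · simp [Function.ne_iff]
  rw [tsum_univ (fun p => ‖g p‖ ^ 2),
    tsum_univ (fun p => (c * ∑ q ∈ Γ.neighborFinset p, g q) * conj (g p))]

theorem rayleighQuotients_eq_empty [IsEmpty ι] (c : ℂ) : Γ.rayleighQuotients c = ∅ :=
  Set.eq_empty_of_forall_notMem fun _ ⟨f, _, hf0, _⟩ => hf0 (Subsingleton.elim f 0)

theorem rayleighQuotients_nonempty [Nonempty ι] (c : ℂ) : (Γ.rayleighQuotients c).Nonempty := by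
  obtain ⟨i⟩ := ‹Nonempty ι›
  refine ⟨_, Pi.single i 1, ?_, by simp, rfl⟩
  refine summable_of_ne_finset_zero (s := {i}) fun j hj => ?_
  simp [Finset.mem_singleton.not.1 hj]

theorem le_of_mem_rayleighQuotients {D : ℕ} (hD : ∀ i, Γ.degree i ≤ D) {c : ℂ} {r : ℝ}
    (hr : r ∈ Γ.rayleighQuotients c) : r ≤ ‖c‖ * D := by
  obtain ⟨f, hf, hf0, rfl⟩ := hr
  obtain ⟨i, hi⟩ := Function.ne_iff.1 hf0
  have hpos : 0 < ∑' x, ‖f x‖ ^ 2 := hf.tsum_pos (fun _ => by positivity) i (by positivity)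
  have hdeg := summable_degree_mul_of_degree_le hD hf
  rw [div_le_iff₀ hpos, tsum_mul_sum_neighborFinset_mul_conj, mul_assoc]
  calc (c * ∑' x, (∑ y ∈ Γ.neighborFinset x, f y) * conj (f x)).re
      ≤ ‖c‖ * ‖∑' x, (∑ y ∈ Γ.neighborFinset x, f y) * conj (f x)‖ :=
        (Complex.re_le_norm _).trans (norm_mul _ _).le
    _ ≤ ‖c‖ * ∑' x, Γ.degree x * ‖f x‖ ^ 2 := by
        gcongr; exact norm_tsum_sum_neighborFinset_mul_conj_le hdeg
    _ ≤ ‖c‖ * (D * ∑' x, ‖f x‖ ^ 2) := by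
        gcongr ‖c‖ * ?_
        rw [← tsum_mul_left]
        exact hdeg.tsum_le_tsum (fun x => by gcongr; exact_mod_cast hD x) (hf.mul_left _)

theorem bddAbove_rayleighQuotients {D : ℕ} (hD : ∀ i, Γ.degree i ≤ D) (c : ℂ) :
    BddAbove (Γ.rayleighQuotients c) :=
  ⟨‖c‖ * D, fun _ => le_of_mem_rayleighQuotients hD⟩

end SimpleGraph

section Zigzag

variable (G : SimpleGraph V) (H : SimpleGraph W) (α : V → V → W)

theorem zigzagVerts_eq_univ (hH : ∀ i, ∃ j, H.Adj i j)
    (hsurj : ∀ u, Set.SurjOn (α u) {v | G.Adj u v} Set.univ) :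
    zigzagVerts G H α = Set.univ :=
  Set.eq_univ_of_forall fun ⟨u, i⟩ => by
    obtain ⟨j, hij⟩ := hH i
    obtain ⟨v, huv, rfl⟩ := hsurj u (Set.mem_univ j)
    exact ⟨v, huv, hij.symm⟩

variable [G.LocallyFinite] [Fintype W] [(zigzag G H α).LocallyFinite]

theorem sum_neighborFinset_zigzag {M : Type*} [AddCommMonoid M] (φ : V × W → M)
    (u : V) (i : W) :
    ∑ q ∈ (zigzag G H α).neighborFinset (u, i), φ q =
      ∑ v ∈ (G.neighborFinset u).filter (fun v => H.Adj (α u v) i),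
        ∑ j ∈ H.neighborFinset (α v u), φ (v, j) :=
  sum_finset_product' (f := fun v j => φ (v, j)) _ _ _ fun q => by
    simp only [SimpleGraph.mem_neighborFinset, mem_filter, and_assoc]
    exact Iff.rfl

theorem degree_zigzag_le {d : ℕ} (hH : ∀ i, H.degree i ≤ d)
    (hinj : ∀ u, Set.InjOn (α u) {v | G.Adj u v}) (p : V × W) :
    (zigzag G H α).degree p ≤ d ^ 2 := by
  obtain ⟨u, i⟩ := p
  have hcard : ((G.neighborFinset u).filter fun v => H.Adj (α u v) i).card ≤ H.degree i := by
    rw [← SimpleGraph.card_neighborFinset_eq_degree]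
    refine card_le_card_of_injOn (α u) (fun v hv => ?_) fun v hv w hw => hinj u ?_ ?_
    all_goals simp_all [SimpleGraph.adj_comm]
  rw [← SimpleGraph.card_neighborFinset_eq_degree, card_eq_sum_ones, sum_neighborFinset_zigzag,
    sq]
  calc ∑ v ∈ (G.neighborFinset u).filter (fun v => H.Adj (α u v) i),
        ∑ j ∈ H.neighborFinset (α v u), 1
      ≤ ∑ v ∈ (G.neighborFinset u).filter (fun v => H.Adj (α u v) i), d :=
        sum_le_sum fun v _ => by simpa using hH _
    _ ≤ d * d := by
        rw [sum_const, smul_eq_mul]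
        gcongr
        exact hcard.trans (hH i)

theorem sum_sum_neighborFinset_zigzag_fst {M : Type*} [AddCommMonoid M] (φ : V → M) (u : V) :
    ∑ i, ∑ q ∈ (zigzag G H α).neighborFinset (u, i), φ q.1 =
      ∑ v ∈ G.neighborFinset u, (H.degree (α u v) * H.degree (α v u)) • φ v := by
  simp_rw [sum_neighborFinset_zigzag, sum_const, SimpleGraph.card_neighborFinset_eq_degree,
    sum_filter]
  rw [sum_comm]
  refine sum_congr rfl fun v _ => ?_
  rw [← sum_filter, sum_const, mul_smul, ← SimpleGraph.neighborFinset_eq_filter,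
    SimpleGraph.card_neighborFinset_eq_degree]

theorem rayleighQuotients_subset_zigzag {m d : ℕ} (hm : m ≠ 0) (hd : d ≠ 0)
    (hWcard : Fintype.card W = m) (hH : ∀ i, H.degree i = d)
    (hinj : ∀ u, Set.InjOn (α u) {v | G.Adj u v}) :
    G.rayleighQuotients (1 / m) ⊆ (zigzag G H α).rayleighQuotients (1 / d ^ 2) := by
  rintro r ⟨f, hf, hf0, rfl⟩
  obtain ⟨u₀, hu₀⟩ := Function.ne_iff.1 hf0
  obtain ⟨i₀⟩ : Nonempty W := Fintype.card_pos_iff.1 (hWcard ▸ Nat.pos_of_ne_zero hm)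
  set g : V × W → ℂ := fun p => f p.1
  have hden : HasSum (fun p => ‖g p‖ ^ 2) ((∑' u, ‖f u‖ ^ 2) * m) := by
    have hf' : Summable fun u => ‖‖f u‖ ^ 2‖ := by simpa using hf
    have h := hf.hasSum.mul (hasSum_fintype fun _ : W => (1 : ℝ))
      (summable_mul_of_summable_norm (g := fun _ : W => (1 : ℝ)) hf' .of_finite)
    simpa only [mul_one, sum_const, card_univ, hWcard, nsmul_eq_mul] using h
  have hdeg := SimpleGraph.summable_degree_mul_of_degree_le
    (degree_zigzag_le G H α (fun i => (hH i).le) hinj) hden.summable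
  have hnum : ∑' p, (∑ q ∈ (zigzag G H α).neighborFinset p, g q) * conj (g p) =
      d ^ 2 * ∑' u, (∑ v ∈ G.neighborFinset u, f v) * conj (f u) := by
    rw [(SimpleGraph.summable_sum_neighborFinset_mul_conj hdeg).tsum_prod' fun _ => .of_finite,
      ← tsum_mul_left]
    refine tsum_congr fun u => ?_
    rw [tsum_fintype]
    simp only [g]
    rw [← sum_mul, sum_sum_neighborFinset_zigzag_fst]
    simp only [hH, nsmul_eq_mul]
    push_cast
    rw [← mul_sum]
    ring
  refine ⟨g, hden.summable, Function.ne_iff.2 ⟨(u₀, i₀), hu₀⟩, ?_⟩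
  rw [SimpleGraph.tsum_mul_sum_neighborFinset_mul_conj,
    SimpleGraph.tsum_mul_sum_neighborFinset_mul_conj, hnum, hden.tsum_eq]
  have hdC : (d : ℂ) ^ 2 ≠ 0 := by exact_mod_cast pow_ne_zero 2 hd
  rw [one_div, one_div, inv_mul_cancel_left₀ hdC, ← div_eq_inv_mul, Complex.div_natCast_re,
    div_div, mul_comm]

end Zigzag

/-- For an `m`-regular graph `G` (`m ≥ 1`), a `d`-regular graph `H` on
`m` vertices (`d ≥ 1`), and an `H`-labeling `α` of `G` with each `α(u,·)` a bijection
from the edges at `u` onto `V(H)`, the supremum of the Rayleigh quotients of the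
normalized adjacency operator of `G` is at most that of `G ⋈_α H`. -/
theorem zigzag_spectral_radius_le (G : SimpleGraph V) (H : SimpleGraph W) (α : V → V → W)
    [∀ x : V, Fintype (G.neighborSet x)] [Fintype W]
    [∀ p : V × W, Fintype ((zigzag G H α).neighborSet p)]
    (m d : ℕ) (hm : 1 ≤ m) (hd : 1 ≤ d)
    (hGreg : ∀ x : V, G.degree x = m)
    (hWcard : Fintype.card W = m)
    (hHreg : ∀ h : W, H.degree h = d)
    (hbij : ∀ x : V, Set.BijOn (fun y => α x y) {y | G.Adj x y} Set.univ) :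
    sSup {r : ℝ | ∃ f : V → ℂ, Summable (fun x : V => ‖f x‖ ^ 2) ∧ f ≠ 0 ∧
        r = (∑' x : V, ((1 / (m : ℂ)) * ∑ y ∈ G.neighborFinset x, f y) *
              (starRingEnd ℂ) (f x)).re / ∑' x : V, ‖f x‖ ^ 2} ≤
    sSup {r : ℝ | ∃ g : V × W → ℂ,
        Summable (fun p : ↥(zigzagVerts G H α) => ‖g p‖ ^ 2) ∧
        (∃ p ∈ zigzagVerts G H α, g p ≠ 0) ∧
        r = (∑' p : ↥(zigzagVerts G H α),
              ((1 / ((d : ℂ) ^ 2)) * ∑ q ∈ (zigzag G H α).neighborFinset (p : V × W), g q) *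
                (starRingEnd ℂ) (g (p : V × W))).re /
            ∑' p : ↥(zigzagVerts G H α), ‖g (p : V × W)‖ ^ 2} := by
  have hH : ∀ i, ∃ j, H.Adj i j := fun i => (H.degree_pos_iff_exists_adj i).1 (hHreg i ▸ hd)
  rw [SimpleGraph.setOf_subtype_eq_rayleighQuotients
    (zigzagVerts_eq_univ G H α hH fun u => (hbij u).surjOn)]
  change sSup (G.rayleighQuotients _) ≤ _
  have hdeg := degree_zigzag_le G H α (fun i => (hHreg i).le) fun u => (hbij u).injOn
  rcases isEmpty_or_nonempty V with hV | hV
  · simp [SimpleGraph.rayleighQuotients_eq_empty]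
  · exact csSup_le_csSup (SimpleGraph.bddAbove_rayleighQuotients hdeg _)
      (G.rayleighQuotients_nonempty _) (rayleighQuotients_subset_zigzag G H α
        (by omega) (by omega) hWcard hHreg fun u => (hbij u).injOn)
end

section
/- Let G be an m-regular simple graph with m ≥ 1, let H be a d-regular simple graph on m vertices with d ≥ 1, and let α be an H-labeling of G such that for each vertex u of G the map e ↦ α(u,e) is a bijection from the set of edges incident to u onto V(H). Let (V_n) be a sequence of nonempty finite subsets of V(G) with ∪_n V_n = V(G) and |∂V_n|/|V_n| → 0. Set S_n = {(u,i) ∈ V(G⋈_α H) : u ∈ V_n}. Then ∪_n S_n = V(G⋈_α H), |S_n| = m·|V_n|, |∂S_n| ≤ d²·|∂V_n| (boundary taken in G⋈_α H), and |∂S_n|/|S_n| → 0; that is, (S_n) is a Følner sequence for G⋈_α H. -/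
/-!
Every vertex of `H` has a neighbour and each `α u` maps the edges at `u` onto `V(H)`, so every
pair `(u, i)` is a vertex of `G ⋈_α H` and `S_n = V_n × V(H)`. An edge of `G ⋈_α H` leaving
`S_n` projects to an edge `{x, y}` of `G` leaving `V_n` (say `x ∈ V_n`), and over it it is
determined by a pair `(i, j)` with `i ~ α x y` and `j ~ α y x` in `H`: at most `d²` edges lie
over each edge of `∂V_n`. Injectivity of `α u` makes `G` locally finite, so all these
boundaries are finite.
-/

open Finset Filter

open scoped Classical

universe u v

variable {V : Type u} {W : Type v}

/-- The edge boundary of a set `S` of vertices: edges of `G` with exactly one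
endpoint in `S`. -/
def edgeBoundary (G : SimpleGraph V) (S : Set V) : Set (Sym2 V) :=
  {e | e ∈ G.edgeSet ∧ ∃ x y, e = s(x, y) ∧ x ∈ S ∧ y ∉ S}

theorem Set.ncard_le_mul_ncard_of_mapsTo {α β : Type*} {s : Set α} {t : Set β}
    {f : α → β} (hf : Set.MapsTo f s t) (ht : t.Finite) {n : ℕ}
    (hfin : ∀ b ∈ t, {a ∈ s | f a = b}.Finite)
    (hn : ∀ b ∈ t, {a ∈ s | f a = b}.ncard ≤ n) :
    s.ncard ≤ n * t.ncard := by
  have hs : s.Finite :=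
    (ht.biUnion hfin).subset fun a ha => Set.mem_biUnion (hf ha) ⟨ha, rfl⟩
  rw [Set.ncard_eq_toFinset_card _ hs, Set.ncard_eq_toFinset_card _ ht]
  refine card_le_mul_card_image_of_maps_to (f := f) (fun a ha => ?_) n fun b hb => ?_
  · simpa using hf (by simpa using ha)
  · rw [Set.Finite.mem_toFinset] at hb
    have hfiber : {a ∈ hs.toFinset | f a = b} = (hfin b hb).toFinset := by ext; simp
    rw [hfiber, ← Set.ncard_eq_toFinset_card _ (hfin b hb)]
    exact hn b hb

namespace SimpleGraph

variable {G : SimpleGraph V} {H : SimpleGraph W} {α : V → V → W}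

theorem edgeBoundary_finite (hG : ∀ x, (G.neighborSet x).Finite) {S : Set V} (hS : S.Finite) :
    (edgeBoundary G S).Finite := by
  refine (hS.biUnion fun x _ => (hG x).image fun y => s(x, y)).subset ?_
  rintro _ ⟨he, x, y, rfl, hx, -⟩
  exact Set.mem_biUnion hx ⟨y, he, rfl⟩

theorem zigzagVerts_eq_univ (hH : ∀ i, (H.neighborSet i).Nonempty)
    (hα : ∀ x, Set.SurjOn (α x) {y | G.Adj x y} Set.univ) :
    zigzagVerts G H α = Set.univ := by
  refine Set.eq_univ_of_forall fun p => ?_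
  obtain ⟨i, hi⟩ := hH p.2
  obtain ⟨y, hy, rfl⟩ := hα p.1 (Set.mem_univ i)
  exact ⟨y, hy, hi.symm⟩

theorem map_fst_mem_edgeBoundary_zigzag {U : Set V} {e : Sym2 (V × W)}
    (he : e ∈ edgeBoundary (zigzag G H α) (Prod.fst ⁻¹' U)) :
    Sym2.map Prod.fst e ∈ edgeBoundary G U := by
  obtain ⟨hadj, p, q, rfl, hp, hq⟩ := he
  exact ⟨hadj.1, p.1, q.1, Sym2.map_mk .., hp, hq⟩

theorem fiber_edgeBoundary_zigzag_subset {U : Set V} {x y : V} (hy : y ∉ U) :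
    {e ∈ edgeBoundary (zigzag G H α) (Prod.fst ⁻¹' U) | Sym2.map Prod.fst e = s(x, y)} ⊆
      (fun ij : W × W => s((x, ij.1), (y, ij.2))) ''
        (H.neighborSet (α x y) ×ˢ H.neighborSet (α y x)) := by
  rintro _ ⟨⟨hadj, ⟨x', i⟩, ⟨y', j⟩, rfl, hx', hy'⟩, hmap⟩
  obtain ⟨rfl, rfl⟩ : x' = x ∧ y' = y := by
    rcases Sym2.eq_iff.mp hmap with h | ⟨rfl, -⟩
    · exact h
    · exact absurd hx' hy
  exact ⟨(i, j), ⟨hadj.2.1, hadj.2.2⟩, rfl⟩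

theorem ncard_edgeBoundary_zigzag_le [Finite W] {d : ℕ}
    (hH : ∀ i, (H.neighborSet i).ncard ≤ d) {U : Set V} (hU : (edgeBoundary G U).Finite) :
    (edgeBoundary (zigzag G H α) (Prod.fst ⁻¹' U)).ncard ≤
      d ^ 2 * (edgeBoundary G U).ncard := by
  refine Set.ncard_le_mul_ncard_of_mapsTo (fun e he => map_fst_mem_edgeBoundary_zigzag he) hU
    ?_ ?_
  · rintro _ ⟨-, x, y, rfl, -, hy⟩
    exact ((Set.toFinite _).image _).subset (fiber_edgeBoundary_zigzag_subset hy)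
  · rintro _ ⟨-, x, y, rfl, -, hy⟩
    calc _ ≤ _ :=
          Set.ncard_le_ncard (fiber_edgeBoundary_zigzag_subset hy) ((Set.toFinite _).image _)
      _ ≤ (H.neighborSet (α x y) ×ˢ H.neighborSet (α y x)).ncard := Set.ncard_image_le
      _ ≤ d ^ 2 := by rw [Set.ncard_prod, sq]; exact Nat.mul_le_mul (hH _) (hH _)

end SimpleGraph

theorem tendsto_div_mul_of_le_mul {a b v : ℕ → ℕ} {c k : ℕ} (hab : ∀ n, a n ≤ c * b n)
    (h : Tendsto (fun n => (b n : ℝ) / v n) atTop (nhds 0)) :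
    Tendsto (fun n => (a n : ℝ) / (k * v n : ℕ)) atTop (nhds 0) := by
  refine squeeze_zero (fun n => by positivity) (fun n => ?_)
    (by simpa using h.const_mul ((c : ℝ) / k))
  calc (a n : ℝ) / (k * v n : ℕ) ≤ (c * b n : ℕ) / (k * v n : ℕ) :=
        div_le_div_of_nonneg_right (by exact_mod_cast hab n) (by positivity)
    _ = c / k * (b n / v n) := by push_cast; rw [div_mul_div_comm]

theorem zigzag_folner_general (G : SimpleGraph V) (H : SimpleGraph W) (α : V → V → W)
    [Fintype W]
    (m d : ℕ) (hd : 1 ≤ d)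
    (hWcard : Fintype.card W = m)
    (hHreg : ∀ h : W, (H.neighborSet h).ncard = d)
    (hbij : ∀ x : V, Set.BijOn (fun y => α x y) {y | G.Adj x y} Set.univ)
    (Vn : ℕ → Finset V)
    (hcover : ∀ x : V, ∃ n, x ∈ Vn n)
    (htend : Tendsto (fun n => ((edgeBoundary G ↑(Vn n)).ncard : ℝ) / (Vn n).card)
      atTop (nhds 0)) :
    (∀ p ∈ zigzagVerts G H α, ∃ n, p ∈ {q ∈ zigzagVerts G H α | q.1 ∈ Vn n}) ∧
    (∀ n, {q ∈ zigzagVerts G H α | q.1 ∈ Vn n}.ncard = m * (Vn n).card) ∧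
    (∀ n, (edgeBoundary (zigzag G H α) {q ∈ zigzagVerts G H α | q.1 ∈ Vn n}).ncard ≤
      d ^ 2 * (edgeBoundary G ↑(Vn n)).ncard) ∧
    Tendsto (fun n =>
        ((edgeBoundary (zigzag G H α) {q ∈ zigzagVerts G H α | q.1 ∈ Vn n}).ncard : ℝ) /
          ({q ∈ zigzagVerts G H α | q.1 ∈ Vn n}).ncard)
      atTop (nhds 0) := by
  have hverts : zigzagVerts G H α = Set.univ :=
    SimpleGraph.zigzagVerts_eq_univ
      (fun i => Set.nonempty_of_ncard_ne_zero (by rw [hHreg]; omega)) fun x => (hbij x).surjOn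
  have hS : ∀ n, {q ∈ zigzagVerts G H α | q.1 ∈ Vn n} = Prod.fst ⁻¹' ↑(Vn n) := by
    simp [hverts, Set.preimage]
  have hcard : ∀ n, {q ∈ zigzagVerts G H α | q.1 ∈ Vn n}.ncard = m * (Vn n).card := by
    intro n
    rw [hS, ← Set.prod_univ, Set.ncard_prod, Set.ncard_univ, Nat.card_eq_fintype_card, hWcard,
      Set.ncard_coe_finset, mul_comm]
  have hGfin : ∀ x, (G.neighborSet x).Finite := fun x =>
    Set.Finite.of_finite_image (Set.toFinite _) (hbij x).injOn
  have hbound : ∀ n,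
      (edgeBoundary (zigzag G H α) {q ∈ zigzagVerts G H α | q.1 ∈ Vn n}).ncard ≤
        d ^ 2 * (edgeBoundary G ↑(Vn n)).ncard := fun n => by
    rw [hS]
    exact SimpleGraph.ncard_edgeBoundary_zigzag_le (fun i => (hHreg i).le)
      (SimpleGraph.edgeBoundary_finite hGfin (Vn n).finite_toSet)
  refine ⟨fun p _ => ?_, hcard, hbound, ?_⟩
  · obtain ⟨n, hn⟩ := hcover p.1
    exact ⟨n, by rw [hS]; exact hn⟩
  · simp only [hcard]
    exact tendsto_div_mul_of_le_mul hbound htend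

/-- With `G` `m`-regular (`m ≥ 1`), `H` `d`-regular on `m` vertices
(`d ≥ 1`), and `α(u,·)` bijections onto `V(H)`: a Følner sequence `(V_n)` for `G`
yields the Følner sequence `S_n = {(u,i) ∈ V(G ⋈_α H) : u ∈ V_n}` for `G ⋈_α H`, with
`∪ S_n = V(G ⋈_α H)`, `|S_n| = m |V_n|`, `|∂S_n| ≤ d² |∂V_n|` and `|∂S_n|/|S_n| → 0`. -/
theorem zigzag_folner (G : SimpleGraph V) (H : SimpleGraph W) (α : V → V → W)
    [Fintype W]
    (m d : ℕ) (hm : 1 ≤ m) (hd : 1 ≤ d)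
    (hGreg : ∀ x : V, (G.neighborSet x).ncard = m)
    (hWcard : Fintype.card W = m)
    (hHreg : ∀ h : W, (H.neighborSet h).ncard = d)
    (hbij : ∀ x : V, Set.BijOn (fun y => α x y) {y | G.Adj x y} Set.univ)
    (Vn : ℕ → Finset V) (hne : ∀ n, (Vn n).Nonempty)
    (hcover : ∀ x : V, ∃ n, x ∈ Vn n)
    (htend : Tendsto (fun n => ((edgeBoundary G ↑(Vn n)).ncard : ℝ) / (Vn n).card)
      atTop (nhds 0)) :
    (∀ p ∈ zigzagVerts G H α, ∃ n, p ∈ {q ∈ zigzagVerts G H α | q.1 ∈ Vn n}) ∧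
    (∀ n, {q ∈ zigzagVerts G H α | q.1 ∈ Vn n}.ncard = m * (Vn n).card) ∧
    (∀ n, (edgeBoundary (zigzag G H α) {q ∈ zigzagVerts G H α | q.1 ∈ Vn n}).ncard ≤
      d ^ 2 * (edgeBoundary G ↑(Vn n)).ncard) ∧
    Tendsto (fun n =>
        ((edgeBoundary (zigzag G H α) {q ∈ zigzagVerts G H α | q.1 ∈ Vn n}).ncard : ℝ) /
          ({q ∈ zigzagVerts G H α | q.1 ∈ Vn n}).ncard)
      atTop (nhds 0) :=
  zigzag_folner_general G H α m d hd hWcard hHreg hbij Vn hcover htend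
end

section
/- Let H be a simple graph, (G,α) an H-labeled graph, and p : G̃ → G a graph covering map. Define the H-labeling β of G̃ by β(x,{x,y}) = α(p(x),{p(x),p(y)}). Then the map p̂ : G̃⋈_β H → G⋈_α H given by p̂(x,i) = (p(x),i) is a well-defined graph covering map. -/
open Finset Filter

open scoped Classical

universe u v

variable {V : Type u} {W : Type v}

/-- `p : G' → G` is a graph covering map: a graph morphism restricting to a bijection
from `N(x)` onto `N(p x)` for every vertex `x`. -/
def IsGraphCovering {V' : Type*} {V : Type*} (G' : SimpleGraph V') (G : SimpleGraph V)
    (p : V' → V) : Prop :=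
  (∀ x y, G'.Adj x y → G.Adj (p x) (p y)) ∧
  ∀ x : V', Set.BijOn p (G'.neighborSet x) (G.neighborSet (p x))

section Zigzag

variable {V' : Type*} {G' : SimpleGraph V'} {G : SimpleGraph V} {H : SimpleGraph W}

theorem zigzag_neighborSet (α : V → V → W) (q : V × W) :
    (zigzag G H α).neighborSet q =
      G.neighborSet q.1 ×ˢ Set.univ ∩ {r | H.Adj (α q.1 r.1) q.2 ∧ H.Adj (α r.1 q.1) r.2} := by
  ext r
  simp [zigzag]

theorem mem_zigzagVerts_of_comp {p : V' → V} (hp : ∀ x y, G'.Adj x y → G.Adj (p x) (p y))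
    (α : V → V → W) {q : V' × W} (hq : q ∈ zigzagVerts G' H (fun x y => α (p x) (p y))) :
    (p q.1, q.2) ∈ zigzagVerts G H α :=
  let ⟨w, hw, hi⟩ := hq
  ⟨p w, hp _ _ hw, hi⟩

theorem zigzag_adj_of_comp {p : V' → V} (hp : ∀ x y, G'.Adj x y → G.Adj (p x) (p y))
    (α : V → V → W) {q r : V' × W} (h : (zigzag G' H (fun x y => α (p x) (p y))).Adj q r) :
    (zigzag G H α).Adj (p q.1, q.2) (p r.1, r.2) :=
  ⟨hp _ _ h.1, h.2⟩

/-- The pulled-back labeling makes the `H`-conditions on a neighbour `(y, j)` of `(x, i)` depend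
on `y` only through `p y`, so the neighbourhood bijection of `p` lifts to the product. -/
theorem IsGraphCovering.zigzag_comp {p : V' → V} (hp : IsGraphCovering G' G p) (α : V → V → W) :
    IsGraphCovering (zigzag G' H (fun x y => α (p x) (p y))) (zigzag G H α)
      (fun q => (p q.1, q.2)) := by
  refine ⟨fun _ _ => zigzag_adj_of_comp hp.1 α, fun q => ?_⟩
  rw [zigzag_neighborSet, zigzag_neighborSet]
  exact ((hp.2 q.1).prodMap (Set.bijOn_id Set.univ)).inter_mapsTo
    (fun _ hr => hr) fun _ hr => hr.2

end Zigzag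

/-- A graph covering map `p : G̃ → G` of an `H`-labeled graph `(G, α)`
induces, via the `H`-labeling `β(x,{x,y}) = α(p x, {p x, p y})` of `G̃`, a well-defined
graph covering map `p̂(x,i) = (p x, i)` from `G̃ ⋈_β H` to `G ⋈_α H`. -/
theorem zigzag_covering {V' : Type*} (G' : SimpleGraph V') (G : SimpleGraph V)
    (H : SimpleGraph W) (α : V → V → W) (p : V' → V)
    (hp : IsGraphCovering G' G p) :
    (∀ q ∈ zigzagVerts G' H (fun x y => α (p x) (p y)), (p q.1, q.2) ∈ zigzagVerts G H α) ∧
    IsGraphCovering (zigzag G' H (fun x y => α (p x) (p y))) (zigzag G H α)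
      (fun q => (p q.1, q.2)) :=
  ⟨fun _ => mem_zigzagVerts_of_comp hp.1 α, hp.zigzag_comp α⟩
end

section
/- Let H be a simple graph, (G,α) an H-labeled graph, and p : G̃ → G a combinatorial covering map with index m. Define the H-labeling β of G̃ by β(x,{x,y}) = α(p(x),{p(x),p(y)}). Then the map p̂ : G̃⋈_β H → G⋈_α H given by p̂(x,i) = (p(x),i) is a well-defined combinatorial covering map with index m. -/
open Finset Filter

open scoped Classical

universe u v

variable {V : Type u} {W : Type v}

/-- `π : G' → G` is a combinatorial covering map with index `m`: a graph morphism such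
that (1) every edge `{u,v}` of `G` has exactly `m` edges of `G'` above it, and
(2) for `π x = π y` and `v` adjacent to `π x`, the sets `N(x) ∩ π⁻¹(v)` and
`N(y) ∩ π⁻¹(v)` have the same cardinality. -/
def IsCombCovering {V' : Type*} {V : Type*} (G' : SimpleGraph V') (G : SimpleGraph V)
    (π : V' → V) (m : ℕ) : Prop :=
  (∀ x y, G'.Adj x y → G.Adj (π x) (π y)) ∧
  (∀ u v, G.Adj u v →
    {e : Sym2 V' | e ∈ G'.edgeSet ∧ ∃ x y, e = s(x, y) ∧ π x = u ∧ π y = v}.ncard = m) ∧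
  (∀ x y, π x = π y → ∀ v, G.Adj (π x) v →
    (G'.neighborSet x ∩ π ⁻¹' {v}).ncard = (G'.neighborSet y ∩ π ⁻¹' {v}).ncard)

/-! The zig-zag product over `G̃` with the pulled-back labeling `β` is, edge for edge, the
pull-back of `G ⋈_α H` along `p`: `(x, i) ∼ (y, j)` exactly when `x ∼ y` in `G̃` and
`(p x, i) ∼ (p y, j)` in `G ⋈_α H`. Hence over a fixed edge or neighbour `(v, j)` of the base
the `H`-coordinate is pinned down, and forgetting it identifies the edges (resp. neighbours) of
`G̃ ⋈_β H` lying over it with those of `G̃` lying over the corresponding edge (resp. vertex)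
of `G`, so both counting conditions are inherited from `p`. -/

section

variable {V' : Type*} {G' : SimpleGraph V'} {G : SimpleGraph V} {H : SimpleGraph W}
  {α : V → V → W} {p : V' → V}

def pullbackLabel (α : V → V → W) (p : V' → V) : V' → V' → W := fun x y => α (p x) (p y)

theorem mem_zigzagVerts_of_adj {a b : V × W} (h : (zigzag G H α).Adj a b) :
    a ∈ zigzagVerts G H α :=
  ⟨b.1, h.1, h.2.1⟩

theorem zigzag_pullbackLabel_adj_iff (hp : ∀ x y, G'.Adj x y → G.Adj (p x) (p y))
    {a b : V' × W} :
    (zigzag G' H (pullbackLabel α p)).Adj a b ↔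
      G'.Adj a.1 b.1 ∧ (zigzag G H α).Adj (p a.1, a.2) (p b.1, b.2) :=
  ⟨fun ⟨h, hi, hj⟩ => ⟨h, hp _ _ h, hi, hj⟩, fun ⟨h, _, hi, hj⟩ => ⟨h, hi, hj⟩⟩

theorem mapsTo_zigzagVerts_pullbackLabel (hp : ∀ x y, G'.Adj x y → G.Adj (p x) (p y)) :
    Set.MapsTo (Prod.map p id) (zigzagVerts G' H (pullbackLabel α p)) (zigzagVerts G H α) :=
  fun _ ⟨w, hw, hi⟩ => ⟨p w, hp _ _ hw, hi⟩

def zigzagCoverMap (hp : ∀ x y, G'.Adj x y → G.Adj (p x) (p y)) :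
    zigzagVerts G' H (pullbackLabel α p) → zigzagVerts G H α :=
  (mapsTo_zigzagVerts_pullbackLabel hp).restrict

theorem zigzagCoverMap_eq_iff (hp : ∀ x y, G'.Adj x y → G.Adj (p x) (p y))
    (a : zigzagVerts G' H (pullbackLabel α p)) (b : zigzagVerts G H α) :
    zigzagCoverMap hp a = b ↔ p a.1.1 = b.1.1 ∧ a.1.2 = b.1.2 := by
  rw [Subtype.ext_iff, Prod.ext_iff]
  rfl

theorem ncard_edges_over_zigzag_edge (hp : ∀ x y, G'.Adj x y → G.Adj (p x) (p y))
    {a b : zigzagVerts G H α} (hab : ((zigzag G H α).induce (zigzagVerts G H α)).Adj a b) :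
    {e | e ∈ ((zigzag G' H (pullbackLabel α p)).induce
        (zigzagVerts G' H (pullbackLabel α p))).edgeSet ∧
      ∃ x y, e = s(x, y) ∧ zigzagCoverMap hp x = a ∧ zigzagCoverMap hp y = b}.ncard =
    {e | e ∈ G'.edgeSet ∧ ∃ x y, e = s(x, y) ∧ p x = a.1.1 ∧ p y = b.1.1}.ncard := by
  refine Set.BijOn.ncard_eq (f := Sym2.map fun q => q.1.1) ⟨?_, ?_, ?_⟩
  · rintro _ ⟨he, x, y, rfl, hx, hy⟩
    rw [zigzagCoverMap_eq_iff] at hx hy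
    exact ⟨((zigzag_pullbackLabel_adj_iff hp).1 he).1, _, _, rfl, hx.1, hy.1⟩
  · rintro _ ⟨-, x, y, rfl, hx, hy⟩ _ ⟨-, x', y', rfl, hx', hy'⟩ heq
    rw [zigzagCoverMap_eq_iff] at hx hy hx' hy'
    rcases Sym2.eq_iff.1 heq with ⟨h₁, h₂⟩ | ⟨h₁, -⟩
    · rw [Subtype.ext (Prod.ext h₁ (hx.2.trans hx'.2.symm)),
        Subtype.ext (Prod.ext h₂ (hy.2.trans hy'.2.symm))]
    · -- the two endpoints lie over the distinct ends of the edge `a b`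
      exact absurd (hx.1.symm.trans ((congrArg p h₁).trans hy'.1)) hab.1.ne
  · rintro _ ⟨he, x, y, rfl, hx, hy⟩
    have hxy : (zigzag G' H (pullbackLabel α p)).Adj (x, a.1.2) (y, b.1.2) :=
      (zigzag_pullbackLabel_adj_iff hp).2 ⟨he, by rwa [hx, hy]⟩
    refine ⟨s(⟨_, mem_zigzagVerts_of_adj hxy⟩, ⟨_, mem_zigzagVerts_of_adj hxy.symm⟩),
      ⟨hxy, _, _, rfl, ?_, ?_⟩, rfl⟩ <;>
      simp [zigzagCoverMap_eq_iff, hx, hy]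

theorem ncard_neighborSet_inter_zigzagCoverMap_fiber
    (hp : ∀ x y, G'.Adj x y → G.Adj (p x) (p y)) (X : zigzagVerts G' H (pullbackLabel α p))
    {b : zigzagVerts G H α}
    (hb : ((zigzag G H α).induce (zigzagVerts G H α)).Adj (zigzagCoverMap hp X) b) :
    (((zigzag G' H (pullbackLabel α p)).induce
        (zigzagVerts G' H (pullbackLabel α p))).neighborSet X ∩
      zigzagCoverMap hp ⁻¹' {b}).ncard =
    (G'.neighborSet X.1.1 ∩ p ⁻¹' {b.1.1}).ncard := by
  refine Set.BijOn.ncard_eq (f := fun q => q.1.1) ⟨?_, ?_, ?_⟩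
  · rintro q ⟨hq, hqb⟩
    exact ⟨((zigzag_pullbackLabel_adj_iff hp).1 hq).1, ((zigzagCoverMap_eq_iff hp q b).1 hqb).1⟩
  · rintro q ⟨-, hq⟩ q' ⟨-, hq'⟩ h
    rw [Set.mem_preimage, Set.mem_singleton_iff, zigzagCoverMap_eq_iff] at hq hq'
    exact Subtype.ext (Prod.ext h (hq.2.trans hq'.2.symm))
  · rintro y ⟨hy, hyb⟩
    have hXy : (zigzag G' H (pullbackLabel α p)).Adj X.1 (y, b.1.2) :=
      (zigzag_pullbackLabel_adj_iff hp).2 ⟨hy, by rwa [hyb]⟩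
    exact ⟨⟨_, mem_zigzagVerts_of_adj hXy.symm⟩,
      ⟨hXy, (zigzagCoverMap_eq_iff hp _ b).2 ⟨hyb, rfl⟩⟩, rfl⟩

end

/-- A combinatorial covering map `p : G̃ → G` with index `m` of an
`H`-labeled graph `(G, α)` induces, via the `H`-labeling
`β(x,{x,y}) = α(p x, {p x, p y})` of `G̃`, a well-defined combinatorial covering map
`p̂(x,i) = (p x, i)` of index `m` from `G̃ ⋈_β H` to `G ⋈_α H` (as graphs on their
vertex sets). -/
theorem zigzag_comb_covering {V' : Type*} (G' : SimpleGraph V') (G : SimpleGraph V)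
    (H : SimpleGraph W) (α : V → V → W) (p : V' → V) (m : ℕ)
    (hp : IsCombCovering G' G p m) :
    (∀ q ∈ zigzagVerts G' H (fun x y => α (p x) (p y)), (p q.1, q.2) ∈ zigzagVerts G H α) ∧
    ∃ F : ↥(zigzagVerts G' H (fun x y => α (p x) (p y))) → ↥(zigzagVerts G H α),
      (∀ q, (F q : V × W) = (p (q : V' × W).1, (q : V' × W).2)) ∧
      IsCombCovering
        ((zigzag G' H (fun x y => α (p x) (p y))).induce
          (zigzagVerts G' H (fun x y => α (p x) (p y))))
        ((zigzag G H α).induce (zigzagVerts G H α)) F m := by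
  obtain ⟨hhom, hedges, hfibers⟩ := hp
  refine ⟨mapsTo_zigzagVerts_pullbackLabel hhom, zigzagCoverMap hhom, fun _ => rfl,
    fun a b hab => ?_, fun a b hab => ?_, fun X Y hXY b hb => ?_⟩
  · exact ((zigzag_pullbackLabel_adj_iff hhom).1 hab).2
  · exact (ncard_edges_over_zigzag_edge hhom hab).trans (hedges _ _ hab.1)
  · have hXY' := (zigzagCoverMap_eq_iff hhom X _).1 hXY
    exact (ncard_neighborSet_inter_zigzagCoverMap_fiber hhom X hb).trans <|
      (hfibers _ _ hXY'.1 _ hb.1).trans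
        (ncard_neighborSet_inter_zigzagCoverMap_fiber hhom Y (hXY ▸ hb)).symm
end

section
/- Let G and H be locally finite simple graphs and let α be a locally constant H-labeling of G such that val(h) = n for every h in the image of α. Then the projection π : G⋈_α H → G, (u,i) ↦ u, is a combinatorial covering map with index n²; moreover, for every vertex (u,i) of G⋈_α H and every vertex v of G adjacent to u, |N(u,i) ∩ π⁻¹(v)| = n. -/
/-!
Over an edge `uv` of `G`, the vertices of `G ⋈_α H` adjacent to `(u, i)` are exactly the
`(v, j)` with `j ∼ α(v, u)`: local constancy of `α` guarantees `i ∼ α(u, v)` for every vertex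
`(u, i)` of the product. So each such fibre is a copy of `N_H(α(v, u))`, of size `n`, and the
edges above `uv` are in bijection with `N_H(α(u, v)) × N_H(α(v, u))`, of size `n²`.
-/

open Finset Filter

open scoped Classical

universe u v

variable {V : Type u} {W : Type v}

theorem Sym2.injective_mk_of_fst_ne {α β : Type*} {a b : α} (hab : a ≠ b) :
    Function.Injective fun p : β × β => s((a, p.1), (b, p.2)) := by
  rintro ⟨i, j⟩ ⟨i', j'⟩ h
  simp only [Sym2.eq_iff, Prod.mk.injEq] at h
  rcases h with ⟨⟨-, rfl⟩, -, rfl⟩ | ⟨⟨rfl, -⟩, -⟩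
  · rfl
  · exact absurd rfl hab

section Zigzag

variable (G : SimpleGraph V) (H : SimpleGraph W) (α : V → V → W)

theorem mk_mem_zigzagVerts {u w : V} {i : W} (huw : G.Adj u w) (hi : H.Adj (α u w) i) :
    (u, i) ∈ zigzagVerts G H α :=
  ⟨w, huw, hi⟩

theorem image_val_neighborSet_inter_fiber
    (hlc : ∀ x y z : V, G.Adj x y → G.Adj x z → α x y = α x z)
    (q : ↥(zigzagVerts G H α)) {x : V} (hqx : G.Adj (q : V × W).1 x) :
    Subtype.val '' (((zigzag G H α).induce (zigzagVerts G H α)).neighborSet q ∩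
        (fun q : ↥(zigzagVerts G H α) => (q : V × W).1) ⁻¹' {x}) =
      Prod.mk x '' H.neighborSet (α x (q : V × W).1) := by
  obtain ⟨⟨u, i⟩, w, huw, hi⟩ := q
  ext p
  constructor
  · rintro ⟨⟨⟨a, b⟩, _⟩, ⟨⟨-, -, hb⟩, (rfl : a = x)⟩, rfl⟩
    exact ⟨b, hb, rfl⟩
  · rintro ⟨j, hj, rfl⟩
    have hi' : H.Adj (α u x) i := hlc u w x huw hqx ▸ hi
    exact ⟨⟨(x, j), mk_mem_zigzagVerts G H α hqx.symm hj⟩, ⟨⟨hqx, hi', hj⟩, rfl⟩, rfl⟩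

theorem ncard_neighborSet_inter_fiber
    (hlc : ∀ x y z : V, G.Adj x y → G.Adj x z → α x y = α x z)
    (q : ↥(zigzagVerts G H α)) {x : V} (hqx : G.Adj (q : V × W).1 x) :
    (((zigzag G H α).induce (zigzagVerts G H α)).neighborSet q ∩
        (fun q : ↥(zigzagVerts G H α) => (q : V × W).1) ⁻¹' {x}).ncard =
      (H.neighborSet (α x (q : V × W).1)).ncard := by
  rw [← Set.ncard_image_of_injective _ Subtype.val_injective,
    image_val_neighborSet_inter_fiber G H α hlc q hqx,
    Set.ncard_image_of_injective _ (Prod.mk_right_injective x)]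

theorem image_map_val_edges_over {u v : V} (huv : G.Adj u v) :
    Sym2.map Subtype.val ''
        {e | e ∈ ((zigzag G H α).induce (zigzagVerts G H α)).edgeSet ∧
          ∃ x y, e = s(x, y) ∧ (x : V × W).1 = u ∧ (y : V × W).1 = v} =
      (fun p : W × W => s((u, p.1), (v, p.2))) ''
        (H.neighborSet (α u v) ×ˢ H.neighborSet (α v u)) := by
  ext e
  constructor
  · rintro ⟨-, ⟨hedge, ⟨⟨a, i⟩, _⟩, ⟨⟨b, j⟩, _⟩, rfl, (rfl : a = u), (rfl : b = v)⟩, rfl⟩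
    exact ⟨(i, j), hedge.2, rfl⟩
  · rintro ⟨⟨i, j⟩, ⟨hi, hj⟩, rfl⟩
    let x : ↥(zigzagVerts G H α) := ⟨(u, i), mk_mem_zigzagVerts G H α huv hi⟩
    let y : ↥(zigzagVerts G H α) := ⟨(v, j), mk_mem_zigzagVerts G H α huv.symm hj⟩
    exact ⟨s(x, y), ⟨⟨huv, hi, hj⟩, x, y, rfl, rfl, rfl⟩, rfl⟩

theorem ncard_edges_over {u v : V} (huv : G.Adj u v) :
    {e | e ∈ ((zigzag G H α).induce (zigzagVerts G H α)).edgeSet ∧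
        ∃ x y, e = s(x, y) ∧ (x : V × W).1 = u ∧ (y : V × W).1 = v}.ncard =
      (H.neighborSet (α u v)).ncard * (H.neighborSet (α v u)).ncard := by
  rw [← Set.ncard_image_of_injective _ (Sym2.map.injective Subtype.val_injective),
    image_map_val_edges_over G H α huv,
    Set.ncard_image_of_injective _ (Sym2.injective_mk_of_fst_ne huv.ne), Set.ncard_prod]

end Zigzag

theorem zigzag_projection_comb_covering_general (G : SimpleGraph V) (H : SimpleGraph W)
    (α : V → V → W)
    (hlc : ∀ x y z : V, G.Adj x y → G.Adj x z → α x y = α x z)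
    (n : ℕ) (hval : ∀ x y : V, G.Adj x y → (H.neighborSet (α x y)).ncard = n) :
    IsCombCovering ((zigzag G H α).induce (zigzagVerts G H α)) G
      (fun q => (q : V × W).1) (n ^ 2) ∧
    ∀ q : ↥(zigzagVerts G H α), ∀ x : V, G.Adj (q : V × W).1 x →
      (((zigzag G H α).induce (zigzagVerts G H α)).neighborSet q ∩
        (fun q : ↥(zigzagVerts G H α) => (q : V × W).1) ⁻¹' {x}).ncard = n := by
  have fiber : ∀ q : ↥(zigzagVerts G H α), ∀ x : V, G.Adj (q : V × W).1 x →
      (((zigzag G H α).induce (zigzagVerts G H α)).neighborSet q ∩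
        (fun q : ↥(zigzagVerts G H α) => (q : V × W).1) ⁻¹' {x}).ncard = n :=
    fun q x hqx => by
      rw [ncard_neighborSet_inter_fiber G H α hlc q hqx, hval x _ hqx.symm]
  refine ⟨⟨fun _ _ hxy => hxy.1, fun u v huv => ?_, fun x y hxy v hxv => ?_⟩, fiber⟩
  · rw [ncard_edges_over G H α huv, hval u v huv, hval v u huv.symm, sq]
  · rw [fiber x v hxv, fiber y v (by simpa only [hxy] using hxv)]

/-- For locally finite `G`, `H` and a locally constant `H`-labeling
`α` with `val(h) = n` on the image of `α`, the projection `π : G ⋈_α H → G`,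
`(u,i) ↦ u`, is a combinatorial covering map with index `n²`; moreover for each vertex
`(u,i)` of `G ⋈_α H` and each `v` adjacent to `u`, `|N(u,i) ∩ π⁻¹(v)| = n`. -/
theorem zigzag_projection_comb_covering (G : SimpleGraph V) (H : SimpleGraph W)
    (α : V → V → W)
    (hGlf : ∀ x : V, (G.neighborSet x).Finite) (hHlf : ∀ h : W, (H.neighborSet h).Finite)
    (hlc : ∀ x y z : V, G.Adj x y → G.Adj x z → α x y = α x z)
    (n : ℕ) (hval : ∀ x y : V, G.Adj x y → (H.neighborSet (α x y)).ncard = n) :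
    IsCombCovering ((zigzag G H α).induce (zigzagVerts G H α)) G
      (fun q => (q : V × W).1) (n ^ 2) ∧
    ∀ q : ↥(zigzagVerts G H α), ∀ x : V, G.Adj (q : V × W).1 x →
      (((zigzag G H α).induce (zigzagVerts G H α)).neighborSet q ∩
        (fun q : ↥(zigzagVerts G H α) => (q : V × W).1) ⁻¹' {x}).ncard = n :=
  zigzag_projection_comb_covering_general G H α hlc n hval
end

section
/- Let G and H be locally finite simple graphs and let α be a locally constant H-labeling of G such that val(h) = m for every h in the image of α. Define recursively: Δ₁ = G and α₁ = α; Δ_{n+1} = Δ_n ⋈_{α_n} H, π_{n+1} : Δ_{n+1} → Δ_n the first-coordinate projection (u,i) ↦ u, and α_{n+1}(x,{x,y}) = α_n(π_{n+1}(x),{π_{n+1}(x),π_{n+1}(y)}). Then for every n ≥ 1, π_{n+1} : Δ_{n+1} → Δ_n is a combinatorial covering map. -/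
/-! The edges of `Δ ⋈_α H` above an edge `{u, v}` of `Δ` are the pairs `{(u, i), (v, j)}` with
`i ∼ α(u, v)` and `j ∼ α(v, u)` in `H`, so there are `val(α(u, v)) · val(α(v, u)) = m²` of them.
If `(u, i)` is a vertex of the product and `v ∼ u`, local constancy gives `i ∼ α(u, v)`, so the
neighbours of `(u, i)` above `v` are exactly the `(v, j)` with `j ∼ α(v, u)`, whatever `i` is.
Both hypotheses on `α_n` pass to `α_{n+1}`, which is pulled back along the projection, so the
argument applies at every level of the tower. -/

open Finset Filter

open scoped Classical

universe u v

variable {V : Type u} {W : Type v}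

/-- An `H`-labeled graph: a vertex type, a simple graph on it and an `H`-labeling. -/
structure LabGraph (W : Type u) : Type (u + 1) where
  V : Type u
  G : SimpleGraph V
  lab : V → V → W

/-- One step of the zig-zag tower: pass from `(Δ, α)` to `Δ ⋈_α H` (on its vertex set)
with the labeling `α'(x,{x,y}) = α(π x, {π x, π y})` pulled back along the
first-coordinate projection `π`. -/
def stepLG {W : Type u} (H : SimpleGraph W) (X : LabGraph W) : LabGraph W where
  V := ↥(zigzagVerts X.G H X.lab)
  G := (zigzag X.G H X.lab).induce (zigzagVerts X.G H X.lab)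
  lab := fun x y => X.lab x.val.1 y.val.1

/-- The first-coordinate projection `π : Δ ⋈_α H → Δ`. -/
def projLG {W : Type u} (H : SimpleGraph W) (X : LabGraph W) : (stepLG H X).V → X.V :=
  fun q => q.val.1

/-- The zig-zag tower `Δ₁ = (G, α)`, `Δ_{n+1} = Δ_n ⋈_{α_n} H` (here indexed from `0`). -/
def towerLG {W : Type u} (H : SimpleGraph W) (X : LabGraph W) : ℕ → LabGraph W
  | 0 => X
  | n + 1 => stepLG H (towerLG H X n)


namespace LabGraph

variable {W : Type u} (H : SimpleGraph W)

def IsLocallyConstant (X : LabGraph W) : Prop :=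
  ∀ x y z, X.G.Adj x y → X.G.Adj x z → X.lab x y = X.lab x z

def IsLabelRegular (X : LabGraph W) (m : ℕ) : Prop :=
  ∀ x y, X.G.Adj x y → (H.neighborSet (X.lab x y)).ncard = m

lemma stepLG_adj {X : LabGraph W} {a b : (stepLG H X).V} :
    (stepLG H X).G.Adj a b ↔
      X.G.Adj a.val.1 b.val.1 ∧ H.Adj (X.lab a.val.1 b.val.1) a.val.2 ∧
        H.Adj (X.lab b.val.1 a.val.1) b.val.2 :=
  Iff.rfl

lemma IsLocallyConstant.step {X : LabGraph W} (hX : X.IsLocallyConstant) :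
    (stepLG H X).IsLocallyConstant :=
  fun x y z hxy hxz => hX x.val.1 y.val.1 z.val.1 hxy.1 hxz.1

lemma IsLabelRegular.step {X : LabGraph W} {m : ℕ} (hX : X.IsLabelRegular H m) :
    (stepLG H X).IsLabelRegular H m :=
  fun x y hxy => hX x.val.1 y.val.1 hxy.1

lemma IsLocallyConstant.tower {X : LabGraph W} (hX : X.IsLocallyConstant) (n : ℕ) :
    (towerLG H X n).IsLocallyConstant := by
  induction n with
  | zero => exact hX
  | succ n ih => exact ih.step H

lemma IsLabelRegular.tower {X : LabGraph W} {m : ℕ} (hX : X.IsLabelRegular H m) (n : ℕ) :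
    (towerLG H X n).IsLabelRegular H m := by
  induction n with
  | zero => exact hX
  | succ n ih => exact ih.step H

lemma ncard_edges_above (X : LabGraph W) {u v : X.V} (huv : X.G.Adj u v) :
    {e : Sym2 (stepLG H X).V | e ∈ (stepLG H X).G.edgeSet ∧
        ∃ x y, e = s(x, y) ∧ projLG H X x = u ∧ projLG H X y = v}.ncard =
      (H.neighborSet (X.lab u v)).ncard * (H.neighborSet (X.lab v u)).ncard := by
  rw [← Set.ncard_prod]
  symm
  refine Set.ncard_congr
    (fun p hp => s((⟨(u, p.1), v, huv, hp.1⟩ : (stepLG H X).V), ⟨(v, p.2), u, huv.symm, hp.2⟩))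
    (fun p hp => ⟨⟨huv, hp.1, hp.2⟩, _, _, rfl, rfl, rfl⟩) ?_ ?_
  · intro p q _ _ hpq
    rcases Sym2.eq_iff.mp hpq with ⟨h₁, h₂⟩ | ⟨h₁, -⟩
    · exact Prod.ext (congrArg (fun x => x.val.2) h₁) (congrArg (fun x => x.val.2) h₂)
    · exact absurd (congrArg (fun x => x.val.1) h₁) huv.ne
  · rintro _ ⟨hE, x, y, rfl, rfl, rfl⟩
    exact ⟨(x.val.2, y.val.2), ⟨hE.2.1, hE.2.2⟩, rfl⟩

lemma IsLocallyConstant.neighborSet_inter_fiber {X : LabGraph W} (hX : X.IsLocallyConstant)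
    {z : (stepLG H X).V} {v : X.V} (hv : X.G.Adj z.val.1 v) :
    (stepLG H X).G.neighborSet z ∩ projLG H X ⁻¹' {v} =
      {q | q.val.1 = v ∧ H.Adj (X.lab v z.val.1) q.val.2} := by
  obtain ⟨w, hw, hzw⟩ := z.2
  have hz : H.Adj (X.lab z.val.1 v) z.val.2 := hX _ _ _ hv hw ▸ hzw
  ext q
  simp only [Set.mem_inter_iff, SimpleGraph.mem_neighborSet, stepLG_adj, Set.mem_preimage,
    Set.mem_singleton_iff, projLG, Set.mem_ofPred_eq]
  constructor
  · rintro ⟨⟨-, -, hq⟩, rfl⟩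
    exact ⟨rfl, hq⟩
  · rintro ⟨rfl, hq⟩
    exact ⟨⟨hv, hz, hq⟩, rfl⟩

theorem isCombCovering_projLG {X : LabGraph W} {m : ℕ} (hlc : X.IsLocallyConstant)
    (hreg : X.IsLabelRegular H m) :
    IsCombCovering (stepLG H X).G X.G (projLG H X) (m * m) := by
  refine ⟨fun x y h => h.1, fun u v huv => ?_, fun x y hxy v hv => ?_⟩
  · rw [ncard_edges_above H X huv, hreg u v huv, hreg v u huv.symm]
  · change x.val.1 = y.val.1 at hxy
    rw [hlc.neighborSet_inter_fiber H hv, hlc.neighborSet_inter_fiber H (hxy ▸ hv), hxy]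

end LabGraph

theorem zigzag_tower_comb_covering_general {V W : Type u} (G : SimpleGraph V) (H : SimpleGraph W)
    (α : V → V → W)
    (hlc : ∀ x y z : V, G.Adj x y → G.Adj x z → α x y = α x z)
    (m : ℕ) (hval : ∀ x y : V, G.Adj x y → (H.neighborSet (α x y)).ncard = m) :
    ∀ n : ℕ, ∃ k : ℕ,
      IsCombCovering (towerLG H ⟨V, G, α⟩ (n + 1)).G (towerLG H ⟨V, G, α⟩ n).G
        (projLG H (towerLG H ⟨V, G, α⟩ n)) k := fun n =>
  ⟨m * m, LabGraph.isCombCovering_projLG H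
    (LabGraph.IsLocallyConstant.tower H (X := ⟨V, G, α⟩) hlc n)
    (LabGraph.IsLabelRegular.tower H (X := ⟨V, G, α⟩) hval n)⟩

/-- For locally finite `G`, `H` and a locally constant `H`-labeling
`α` with `val(h) = m` on the image of `α`, every projection `π_{n+1} : Δ_{n+1} → Δ_n`
in the zig-zag tower `Δ₁ = G`, `Δ_{n+1} = Δ_n ⋈_{α_n} H` is a combinatorial covering
map. -/
theorem zigzag_tower_comb_covering {V W : Type u} (G : SimpleGraph V) (H : SimpleGraph W)
    (α : V → V → W)
    (hGlf : ∀ x : V, (G.neighborSet x).Finite) (hHlf : ∀ h : W, (H.neighborSet h).Finite)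
    (hlc : ∀ x y z : V, G.Adj x y → G.Adj x z → α x y = α x z)
    (m : ℕ) (hval : ∀ x y : V, G.Adj x y → (H.neighborSet (α x y)).ncard = m) :
    ∀ n : ℕ, ∃ k : ℕ,
      IsCombCovering (towerLG H ⟨V, G, α⟩ (n + 1)).G (towerLG H ⟨V, G, α⟩ n).G
        (projLG H (towerLG H ⟨V, G, α⟩ n)) k :=
  zigzag_tower_comb_covering_general G H α hlc m hval
end
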